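/- In ℂ² ⊗ ℂ² ⊗ ℂ², the vectors φ₁ = |001⟩ − |010⟩ − 2|011⟩ − 2|110⟩, φ₂ = |001⟩ − |010⟩ + 2|011⟩ − 2|101⟩, φ₃ = |001⟩ + |010⟩ − |100⟩ are linearly independent and their span is a three-dimensional genuinely entangled subspace (a GES of the maximal possible dimension 2² − 1 = 3 for three qubits). -/

import Mathlib

noncomputable section

abbrev TriH (d₁ d₂ d₃ : ℕ) := EuclideanSpace ℂ (Fin d₁ × Fin d₂ × Fin d₃)

def BiprodA {d₁ d₂ d₃ : ℕ} (ψ : TriH d₁ d₂ d₃) : Prop :=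
  ∃ (a : Fin d₁ → ℂ) (g : Fin d₂ × Fin d₃ → ℂ), ∀ i j k, ψ (i, j, k) = a i * g (j, k)

def BiprodB {d₁ d₂ d₃ : ℕ} (ψ : TriH d₁ d₂ d₃) : Prop :=
  ∃ (b : Fin d₂ → ℂ) (g : Fin d₁ × Fin d₃ → ℂ), ∀ i j k, ψ (i, j, k) = b j * g (i, k)

def BiprodC {d₁ d₂ d₃ : ℕ} (ψ : TriH d₁ d₂ d₃) : Prop :=
  ∃ (c : Fin d₃ → ℂ) (g : Fin d₁ × Fin d₂ → ℂ), ∀ i j k, ψ (i, j, k) = c k * g (i, j)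

def IsGME3 {d₁ d₂ d₃ : ℕ} (ψ : TriH d₁ d₂ d₃) : Prop :=
  ψ ≠ 0 ∧ ¬ BiprodA ψ ∧ ¬ BiprodB ψ ∧ ¬ BiprodC ψ

def IsGES3 {d₁ d₂ d₃ : ℕ} (V : Submodule ℂ (TriH d₁ d₂ d₃)) : Prop :=
  ∀ ψ ∈ V, ψ ≠ 0 → IsGME3 ψ

/-- The standard basis vector `|ijk⟩` of the three-qubit space. -/
def ket (i j k : Fin 2) : TriH 2 2 2 := WithLp.toLp 2 (fun p => if p = (i, j, k) then (1 : ℂ) else 0)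

/-!
If `x φ₁ + y φ₂ + z φ₃` is a product across some cut, all 2×2 minors of the corresponding
flattening vanish. For each cut, a few of these minors, computed from the coefficient table of the
combination, successively force squares such as `(x - y)²`, `x²`, `y²`, `z²` to vanish, so
`x = y = z = 0`.
-/

section Minors

variable {d₁ d₂ d₃ : ℕ} {ψ : TriH d₁ d₂ d₃}

theorem BiprodA.apply_mul_apply (h : BiprodA ψ) (i i' : Fin d₁) (j j' : Fin d₂) (k k' : Fin d₃) :
    ψ (i, j, k) * ψ (i', j', k') = ψ (i, j', k') * ψ (i', j, k) := by
  obtain ⟨a, g, hψ⟩ := h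
  simp only [hψ]
  ring

theorem BiprodB.apply_mul_apply (h : BiprodB ψ) (i i' : Fin d₁) (j j' : Fin d₂) (k k' : Fin d₃) :
    ψ (i, j, k) * ψ (i', j', k') = ψ (i', j, k') * ψ (i, j', k) := by
  obtain ⟨b, g, hψ⟩ := h
  simp only [hψ]
  ring

theorem BiprodC.apply_mul_apply (h : BiprodC ψ) (i i' : Fin d₁) (j j' : Fin d₂) (k k' : Fin d₃) :
    ψ (i, j, k) * ψ (i', j', k') = ψ (i, j, k') * ψ (i', j', k) := by
  obtain ⟨c, g, hψ⟩ := h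
  simp only [hψ]
  ring

end Minors

def φ₁ : TriH 2 2 2 := ket 0 0 1 - ket 0 1 0 - (2 : ℂ) • ket 0 1 1 - (2 : ℂ) • ket 1 1 0

def φ₂ : TriH 2 2 2 := ket 0 0 1 - ket 0 1 0 + (2 : ℂ) • ket 0 1 1 - (2 : ℂ) • ket 1 0 1

def φ₃ : TriH 2 2 2 := ket 0 0 1 + ket 0 1 0 - ket 1 0 0

def combo (x y z : ℂ) : TriH 2 2 2 := x • φ₁ + y • φ₂ + z • φ₃

section Coefficients

variable (x y z : ℂ)

theorem combo_000 : combo x y z (0, 0, 0) = 0 := by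
  simp [combo, φ₁, φ₂, φ₃, ket, Prod.ext_iff]

theorem combo_001 : combo x y z (0, 0, 1) = x + y + z := by
  simp [combo, φ₁, φ₂, φ₃, ket, Prod.ext_iff]

theorem combo_010 : combo x y z (0, 1, 0) = -x - y + z := by
  simp [combo, φ₁, φ₂, φ₃, ket, Prod.ext_iff, sub_eq_add_neg]

theorem combo_011 : combo x y z (0, 1, 1) = -2 * x + 2 * y := by
  simp [combo, φ₁, φ₂, φ₃, ket, Prod.ext_iff, mul_comm]

theorem combo_100 : combo x y z (1, 0, 0) = -z := by
  simp [combo, φ₁, φ₂, φ₃, ket, Prod.ext_iff]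

theorem combo_101 : combo x y z (1, 0, 1) = -2 * y := by
  simp [combo, φ₁, φ₂, φ₃, ket, Prod.ext_iff, mul_comm]

theorem combo_110 : combo x y z (1, 1, 0) = -2 * x := by
  simp [combo, φ₁, φ₂, φ₃, ket, Prod.ext_iff, mul_comm]

theorem combo_111 : combo x y z (1, 1, 1) = 0 := by
  simp [combo, φ₁, φ₂, φ₃, ket, Prod.ext_iff]

end Coefficients

variable {x y z : ℂ}

theorem combo_eq_zero_iff : combo x y z = 0 ↔ x = 0 ∧ y = 0 ∧ z = 0 := by
  constructor
  · intro h
    have h101 := combo_101 x y z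
    have h110 := combo_110 x y z
    have h100 := combo_100 x y z
    rw [h, PiLp.zero_apply] at h101 h110 h100
    exact ⟨by linear_combination h110 / 2, by linear_combination h101 / 2,
      by linear_combination h100⟩
  · rintro ⟨rfl, rfl, rfl⟩
    simp [combo]

theorem eq_zero_of_biprodA_combo (h : BiprodA (combo x y z)) : x = 0 ∧ y = 0 ∧ z = 0 := by
  have m₁ := h.apply_mul_apply 0 1 0 1 1 1
  have m₂ := h.apply_mul_apply 0 1 1 1 0 1
  have m₃ := h.apply_mul_apply 0 1 0 1 1 0
  have m₄ := h.apply_mul_apply 0 1 0 0 0 1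
  simp only [combo_000, combo_001, combo_010, combo_011, combo_100, combo_101, combo_110,
    combo_111] at m₁ m₂ m₃ m₄
  obtain rfl : x = y := sub_eq_zero.mp <| mul_self_eq_zero.mp <| by
    linear_combination m₁ / 4 - m₂ / 4
  obtain rfl : x = 0 := mul_self_eq_zero.mp <| by linear_combination -m₃ / 8
  obtain rfl : z = 0 := mul_self_eq_zero.mp <| by linear_combination m₄
  exact ⟨rfl, rfl, rfl⟩

theorem eq_zero_of_biprodB_combo (h : BiprodB (combo x y z)) : x = 0 ∧ y = 0 ∧ z = 0 := by
  have n₁ := h.apply_mul_apply 0 0 0 1 0 1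
  have n₂ := h.apply_mul_apply 0 1 0 1 0 0
  have n₃ := h.apply_mul_apply 0 1 0 1 1 0
  have n₄ := h.apply_mul_apply 0 1 0 1 1 1
  have n₅ := h.apply_mul_apply 1 1 0 1 0 1
  simp only [combo_000, combo_001, combo_010, combo_011, combo_100, combo_101, combo_110,
    combo_111] at n₁ n₂ n₃ n₄ n₅
  obtain rfl : y = 0 := mul_self_eq_zero.mp <| by linear_combination -n₅ / 4 + n₄ / 4
  obtain rfl : z = 0 := mul_self_eq_zero.mp <| by
    linear_combination -n₁ / 3 + 2 * n₂ / 3 - n₃ / 6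
  obtain rfl : x = 0 := mul_self_eq_zero.mp <| by linear_combination n₁
  exact ⟨rfl, rfl, rfl⟩

theorem eq_zero_of_biprodC_combo (h : BiprodC (combo x y z)) : x = 0 ∧ y = 0 ∧ z = 0 := by
  have p₁ := h.apply_mul_apply 1 1 0 1 0 1
  have p₂ := h.apply_mul_apply 0 1 1 1 0 1
  have p₃ := h.apply_mul_apply 0 1 1 0 0 1
  have p₄ := h.apply_mul_apply 0 1 0 0 0 1
  simp only [combo_000, combo_001, combo_010, combo_011, combo_100, combo_101, combo_110,
    combo_111] at p₁ p₂ p₃ p₄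
  obtain rfl : x = 0 := mul_self_eq_zero.mp <| by linear_combination -p₁ / 4 - p₂ / 4
  obtain rfl : y = 0 := mul_self_eq_zero.mp <| by linear_combination p₃ / 2
  obtain rfl : z = 0 := mul_self_eq_zero.mp <| by linear_combination p₄
  exact ⟨rfl, rfl, rfl⟩

theorem linearIndependent_φ : LinearIndependent ℂ ![φ₁, φ₂, φ₃] := by
  rw [Fintype.linearIndependent_iff]
  intro c hc
  rw [Fin.sum_univ_three] at hc
  obtain ⟨h₀, h₁, h₂⟩ := combo_eq_zero_iff.mp hc
  intro i
  fin_cases i <;> assumption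

theorem range_φ : Set.range ![φ₁, φ₂, φ₃] = {φ₁, φ₂, φ₃} := by
  rw [Matrix.range_cons, Matrix.range_cons_cons_empty]
  rfl

theorem exists_combo_of_mem_span {ψ : TriH 2 2 2} (h : ψ ∈ Submodule.span ℂ {φ₁, φ₂, φ₃}) :
    ∃ x y z, combo x y z = ψ := by
  rw [← range_φ, Submodule.mem_span_range_iff_exists_fun] at h
  obtain ⟨c, rfl⟩ := h
  exact ⟨c 0, c 1, c 2, by simp [combo, Fin.sum_univ_three]⟩

theorem finrank_span_φ : Module.finrank ℂ (Submodule.span ℂ {φ₁, φ₂, φ₃}) = 3 := by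
  rw [← range_φ, finrank_span_eq_card linearIndependent_φ, Fintype.card_fin]

theorem isGES3_span_φ : IsGES3 (Submodule.span ℂ {φ₁, φ₂, φ₃}) := by
  intro ψ hψ hne
  obtain ⟨x, y, z, rfl⟩ := exists_combo_of_mem_span hψ
  rw [Ne, combo_eq_zero_iff] at hne
  exact ⟨by rwa [Ne, combo_eq_zero_iff], fun h => hne (eq_zero_of_biprodA_combo h),
    fun h => hne (eq_zero_of_biprodB_combo h), fun h => hne (eq_zero_of_biprodC_combo h)⟩

/-- `φ₁ = |001⟩ − |010⟩ − 2|011⟩ − 2|110⟩`,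
`φ₂ = |001⟩ − |010⟩ + 2|011⟩ − 2|101⟩`, `φ₃ = |001⟩ + |010⟩ − |100⟩` are linearly
independent and span a three-dimensional GES of `ℂ²⊗ℂ²⊗ℂ²`. -/
theorem GES1_three_qubits :
    LinearIndependent ℂ
      ![ket 0 0 1 - ket 0 1 0 - (2 : ℂ) • ket 0 1 1 - (2 : ℂ) • ket 1 1 0,
        ket 0 0 1 - ket 0 1 0 + (2 : ℂ) • ket 0 1 1 - (2 : ℂ) • ket 1 0 1,
        ket 0 0 1 + ket 0 1 0 - ket 1 0 0] ∧
    Module.finrank ℂ (Submodule.span ℂ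
      {ket 0 0 1 - ket 0 1 0 - (2 : ℂ) • ket 0 1 1 - (2 : ℂ) • ket 1 1 0,
       ket 0 0 1 - ket 0 1 0 + (2 : ℂ) • ket 0 1 1 - (2 : ℂ) • ket 1 0 1,
       ket 0 0 1 + ket 0 1 0 - ket 1 0 0}) = 3 ∧
    IsGES3 (Submodule.span ℂ
      {ket 0 0 1 - ket 0 1 0 - (2 : ℂ) • ket 0 1 1 - (2 : ℂ) • ket 1 1 0,
       ket 0 0 1 - ket 0 1 0 + (2 : ℂ) • ket 0 1 1 - (2 : ℂ) • ket 1 0 1,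
       ket 0 0 1 + ket 0 1 0 - ket 1 0 0}) := by
  exact ⟨linearIndependent_φ, finrank_span_φ, isGES3_span_φ⟩
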